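/- arXiv:0812.4699 — 2 statements merged into one kernel-verified Lean document; each statement's English description precedes it below -/
import Mathlib

section
/- Let d ≥ 1 be an integer, a > 0, 0 < c_f ≤ C_f, and let X be a random vector in ℝ^d whose law has a Lebesgue density f with f(x) = 0 for ‖x‖ > a and c_f/V ≤ f(x) ≤ C_f/V for ‖x‖ ≤ a, where V is the Lebesgue measure of the ball B_a^d. For a unit vector θ ∈ ℝ^d define the transformed variable Z_θ = F_d(⟨X, θ⟩). Then the law of Z_θ has a Lebesgue density h satisfying c_f ≤ h(z) ≤ C_f for almost every z ∈ [0,1], and h(z) = 0 for almost every z outside [0,1]; in particular Z_θ is quasi-uniform on [0,1]. -/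
/-!
Slicing the ball `‖x‖ ≤ a` orthogonally to `θ` gives `(d-1)`-dimensional balls of radius
`√(a² - t²)`, so the cap `{‖x‖ ≤ a, ⟪x, θ⟫ ≤ ν}` has volume `V · F_d(ν)`: `F_d` is exactly the
normalised distribution function of `⟪x, θ⟫` for `x` uniform on the ball. As `F_d` is continuous
and strictly increasing on `[-a, a]`, the map `x ↦ F_d ⟪x, θ⟫` pushes the uniform measure on the
ball forward to the uniform measure on `[0, 1]`. The law of `X` lies between `c_f` and `C_f` times
the uniform measure on the ball, hence the law of `Z_θ` lies between `c_f` and `C_f` times Lebesgue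
measure on `[0, 1]`, and its Radon–Nikodym derivative inherits these bounds.
-/

open MeasureTheory Set
open scoped RealInnerProductSpace

section DensityBounds

variable {α : Type*} [MeasurableSpace α] {μ ν : Measure α} {s : Set α}

lemma smul_restrict_le_withDensity_ofReal (hs : MeasurableSet s) {c : ℝ} {f : α → ℝ}
    (hf : ∀ x ∈ s, c ≤ f x) :
    ENNReal.ofReal c • ν.restrict s ≤ ν.withDensity fun x => ENNReal.ofReal (f x) := by
  rw [← withDensity_const, ← withDensity_indicator hs]
  refine withDensity_mono (ae_of_all _ fun x => ?_)
  by_cases hx : x ∈ s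
  · simpa [hx] using ENNReal.ofReal_le_ofReal (hf x hx)
  · simp [hx]

lemma withDensity_ofReal_le_smul_restrict (hs : MeasurableSet s) {C : ℝ} {f : α → ℝ}
    (hf0 : ∀ x ∉ s, f x = 0) (hf : ∀ x ∈ s, f x ≤ C) :
    (ν.withDensity fun x => ENNReal.ofReal (f x)) ≤ ENNReal.ofReal C • ν.restrict s := by
  rw [← withDensity_const, ← withDensity_indicator hs]
  refine withDensity_mono (ae_of_all _ fun x => ?_)
  by_cases hx : x ∈ s
  · simpa [hx] using ENNReal.ofReal_le_ofReal (hf x hx)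
  · simp [hx, hf0 x hx]

lemma rnDeriv_le_indicator_of_le_smul_restrict [SigmaFinite ν] (hs : MeasurableSet s)
    {C : ENNReal} (h : μ ≤ C • ν.restrict s) :
    μ.rnDeriv ν ≤ᵐ[ν] s.indicator fun _ => C := by
  refine ae_le_of_forall_setLIntegral_le_of_sigmaFinite (μ.measurable_rnDeriv ν) fun t ht _ => ?_
  calc ∫⁻ x in t, μ.rnDeriv ν x ∂ν ≤ μ t := Measure.setLIntegral_rnDeriv_le t
    _ ≤ C * ν (t ∩ s) := by simpa [Measure.restrict_apply ht] using h t
    _ = ∫⁻ x in t, s.indicator (fun _ => C) x ∂ν := by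
      rw [lintegral_indicator hs, Measure.restrict_restrict hs, setLIntegral_const, inter_comm]

lemma ae_le_rnDeriv_of_smul_restrict_le [SigmaFinite ν] [μ.HaveLebesgueDecomposition ν]
    (hs : MeasurableSet s) (hμν : μ ≪ ν) {c : ENNReal} (h : c • ν.restrict s ≤ μ) :
    ∀ᵐ x ∂ν, x ∈ s → c ≤ μ.rnDeriv ν x := by
  rw [← ae_restrict_iff' hs]
  refine ae_le_of_forall_setLIntegral_le_of_sigmaFinite measurable_const fun t ht _ => ?_
  rw [setLIntegral_const, Measure.restrict_restrict ht,
    Measure.setLIntegral_rnDeriv' hμν (ht.inter hs)]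
  simpa [Measure.restrict_apply ht, Measure.restrict_apply (ht.inter hs), inter_assoc] using
    h (t ∩ s)

theorem exists_density_of_smul_restrict_le_le [SigmaFinite ν] (hs : MeasurableSet s) {c C : ℝ}
    (hC : 0 ≤ C) (hlow : ENNReal.ofReal c • ν.restrict s ≤ μ)
    (hup : μ ≤ ENNReal.ofReal C • ν.restrict s) :
    ∃ h : α → ℝ, μ = ν.withDensity (fun x => ENNReal.ofReal (h x)) ∧
      ∀ᵐ x ∂ν, (x ∈ s → c ≤ h x ∧ h x ≤ C) ∧ (x ∉ s → h x = 0) := by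
  have : SigmaFinite μ := Measure.sigmaFinite_of_le _ (hup.trans_eq (withDensity_const _).symm)
  have hμν : μ ≪ ν :=
    (Measure.absolutelyContinuous_of_le hup).trans
      (Measure.smul_absolutelyContinuous.trans Measure.absolutelyContinuous_restrict)
  have hle := rnDeriv_le_indicator_of_le_smul_restrict hs hup
  refine ⟨fun x => (μ.rnDeriv ν x).toReal, ?_, ?_⟩
  · have hfin : ∀ᵐ x ∂ν, μ.rnDeriv ν x ≠ ⊤ := hle.mono fun x hx =>
      ((hx.trans (indicator_le_self _ _ x)).trans_lt ENNReal.ofReal_lt_top).ne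
    rw [withDensity_congr_ae (hfin.mono fun x hx => ENNReal.ofReal_toReal hx),
      Measure.withDensity_rnDeriv_eq _ _ hμν]
  · filter_upwards [hle, ae_le_rnDeriv_of_smul_restrict_le hs hμν hlow] with x hup hlow
    refine ⟨fun hx => ?_, fun hx => by simp_all⟩
    rw [indicator_of_mem hx] at hup
    exact ⟨(ENNReal.ofReal_le_iff_le_toReal (ne_top_of_le_ne_top ENNReal.ofReal_ne_top hup)).1
      (hlow hx), ENNReal.toReal_le_of_le_ofReal hC hup⟩

end DensityBounds

noncomputable def unitBallVolume (n : ℕ) : ℝ := √Real.pi ^ n / Real.Gamma (n / 2 + 1)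

lemma unitBallVolume_pos (n : ℕ) : 0 < unitBallVolume n := by
  have := Real.Gamma_pos_of_pos (by positivity : (0 : ℝ) < n / 2 + 1)
  unfold unitBallVolume
  positivity

/-- `betaNormConst d` and `rescaledBetaCDF d a` are the constant `c_d` and the distribution
function `F_d` of the rescaled centered Beta law. -/
noncomputable def betaNormConst (d : ℕ) : ℝ :=
  Real.Gamma ((d : ℝ) + 1) / (Real.Gamma (((d : ℝ) + 1) / 2) ^ 2 * 2 ^ d)

noncomputable def rescaledBetaCDF (d : ℕ) (a ν : ℝ) : ℝ :=
  ∫ t in (-1 : ℝ)..(ν / a), betaNormConst d * (1 - t ^ 2) ^ (((d : ℝ) - 1) / 2)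

lemma betaNormConst_pos (d : ℕ) : 0 < betaNormConst d := by
  unfold betaNormConst
  have := Real.Gamma_pos_of_pos (by positivity : (0 : ℝ) < d + 1)
  have := Real.Gamma_pos_of_pos (by positivity : (0 : ℝ) < (d + 1) / 2)
  positivity

lemma unitBallVolume_succ_mul_betaNormConst (n : ℕ) :
    unitBallVolume (n + 1) * betaNormConst (n + 1) = unitBallVolume n := by
  have hdup := Real.Gamma_mul_Gamma_add_half (((n : ℝ) + 1 + 1) / 2)
  rw [show 2 * (((n : ℝ) + 1 + 1) / 2) = n + 1 + 1 by ring,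
    show ((n : ℝ) + 1 + 1) / 2 + 1 / 2 = (n + 1) / 2 + 1 by ring,
    show (1 : ℝ) - (n + 1 + 1) = -(n + 1 : ℕ) by push_cast; ring,
    Real.rpow_neg zero_le_two, Real.rpow_natCast] at hdup
  unfold unitBallVolume betaNormConst
  rw [show (n : ℝ) / 2 + 1 = (n + 1 + 1) / 2 by ring]
  push_cast
  field_simp
  rw [show ((n : ℝ) + 1 + 2) / 2 = (n + 1) / 2 + 1 by ring,
    mul_comm (Real.Gamma ((n + 1) / 2 + 1)), hdup]
  field_simp
  ring

lemma rescaledBetaCDF_succ (n : ℕ) (a ν : ℝ) :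
    rescaledBetaCDF (n + 1) a ν =
      ∫ t in (-1 : ℝ)..(ν / a), betaNormConst (n + 1) * (1 - t ^ 2) ^ ((n : ℝ) / 2) := by
  simp [rescaledBetaCDF]

lemma continuous_rescaledBetaCDF_integrand (n : ℕ) :
    Continuous fun t : ℝ => betaNormConst (n + 1) * (1 - t ^ 2) ^ ((n : ℝ) / 2) := by
  have := Real.continuous_rpow_const (by positivity : (0 : ℝ) ≤ n / 2)
  fun_prop

lemma continuous_rescaledBetaCDF (n : ℕ) (a : ℝ) : Continuous (rescaledBetaCDF (n + 1) a) := by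
  simp_rw [funext (rescaledBetaCDF_succ n a)]
  exact (intervalIntegral.continuous_primitive
    (fun _ _ => (continuous_rescaledBetaCDF_integrand n).intervalIntegrable _ _) (-1)).comp
    (continuous_id.div_const a)

lemma rescaledBetaCDF_neg_self (d : ℕ) {a : ℝ} (ha : a ≠ 0) : rescaledBetaCDF d a (-a) = 0 := by
  simp [rescaledBetaCDF, neg_div, div_self ha]

lemma strictMonoOn_rescaledBetaCDF (n : ℕ) {a : ℝ} (ha : 0 < a) :
    StrictMonoOn (rescaledBetaCDF (n + 1) a) (Icc (-a) a) := by
  intro x hx y hy hxy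
  have hint := (continuous_rescaledBetaCDF_integrand n).intervalIntegrable (μ := volume)
  rw [← sub_pos, rescaledBetaCDF_succ, rescaledBetaCDF_succ,
    intervalIntegral.integral_interval_sub_left (hint _ _) (hint _ _)]
  refine intervalIntegral.intervalIntegral_pos_of_pos_on (hint _ _) (fun t ht => ?_)
    (div_lt_div_of_pos_right hxy ha)
  have h₁ : -1 < t := lt_of_le_of_lt (by rw [le_div_iff₀ ha]; linarith [hx.1]) ht.1
  have h₂ : t < 1 := ht.2.trans_le (by rw [div_le_one ha]; exact hy.2)
  exact mul_pos (betaNormConst_pos _) (Real.rpow_pos_of_pos (by nlinarith) _)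

lemma integral_sqrt_sq_sub_sq_pow_mul_unitBallVolume (n : ℕ) {a ν : ℝ} (ha : 0 < a)
    (hν : ν ∈ Icc (-a) a) :
    ∫ t in (-a)..ν, √(a ^ 2 - t ^ 2) ^ n * unitBallVolume n =
      a ^ (n + 1) * unitBallVolume (n + 1) * rescaledBetaCDF (n + 1) a ν := by
  have hpt : EqOn (fun t => √(a ^ 2 - t ^ 2) ^ n * unitBallVolume n)
      (fun t => a ^ n * unitBallVolume (n + 1) *
        (betaNormConst (n + 1) * (1 - (t / a) ^ 2) ^ ((n : ℝ) / 2))) (uIcc (-a) ν) := by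
    intro t ht
    rw [uIcc_of_le hν.1] at ht
    have h₁ : 0 ≤ 1 - (t / a) ^ 2 := by
      rw [sub_nonneg, div_pow, div_le_one (by positivity)]; nlinarith [ht.1, ht.2, hν.2]
    have h₂ : √(a ^ 2 - t ^ 2) = a * √(1 - (t / a) ^ 2) := by
      rw [show a ^ 2 - t ^ 2 = a ^ 2 * (1 - (t / a) ^ 2) by field_simp,
        Real.sqrt_mul (sq_nonneg a), Real.sqrt_sq ha.le]
    simp only
    rw [Real.rpow_div_two_eq_sqrt _ h₁, Real.rpow_natCast, h₂,
      ← unitBallVolume_succ_mul_betaNormConst]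
    ring
  rw [intervalIntegral.integral_congr hpt, intervalIntegral.integral_const_mul,
    intervalIntegral.integral_comp_div
      (fun s => betaNormConst (n + 1) * (1 - s ^ 2) ^ ((n : ℝ) / 2)) ha.ne', neg_div, div_self ha.ne', ← rescaledBetaCDF_succ, smul_eq_mul]
  ring

namespace EuclideanSpace

noncomputable def headTailEquiv (n : ℕ) :
    EuclideanSpace ℝ (Fin (n + 1)) ≃ᵐ ℝ × EuclideanSpace ℝ (Fin n) :=
  (MeasurableEquiv.toLp 2 (Fin (n + 1) → ℝ)).symm.trans <|
    (MeasurableEquiv.piFinSuccAbove (fun _ => ℝ) 0).trans <|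
      (MeasurableEquiv.refl ℝ).prodCongr (MeasurableEquiv.toLp 2 (Fin n → ℝ))

lemma measurePreserving_headTailEquiv (n : ℕ) : MeasurePreserving (headTailEquiv n) :=
  ((MeasurePreserving.id volume).prod (PiLp.volume_preserving_toLp (Fin n))).comp <|
    (volume_preserving_piFinSuccAbove (fun _ => ℝ) 0).comp
      (volume_preserving_symm_measurableEquiv_toLp (Fin (n + 1)))

lemma headTailEquiv_fst (n : ℕ) (x : EuclideanSpace ℝ (Fin (n + 1))) :
    (headTailEquiv n x).1 = x 0 := rfl

lemma norm_sq_eq_headTailEquiv (n : ℕ) (x : EuclideanSpace ℝ (Fin (n + 1))) :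
    ‖x‖ ^ 2 = (headTailEquiv n x).1 ^ 2 + ‖(headTailEquiv n x).2‖ ^ 2 := by
  simp only [EuclideanSpace.norm_sq_eq, Fin.sum_univ_succ, Real.norm_eq_abs, sq_abs]
  rfl

/-- Unlike `EuclideanSpace.volume_closedBall`, this includes the case `n = 0`. -/
lemma volume_closedBall_zero_fin (n : ℕ) {r : ℝ} (hr : 0 ≤ r) :
    volume (Metric.closedBall (0 : EuclideanSpace ℝ (Fin n)) r) =
      ENNReal.ofReal r ^ n * ENNReal.ofReal (unitBallVolume n) := by
  rcases n with _ | n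
  · have hball : Metric.closedBall (0 : EuclideanSpace ℝ (Fin 0)) r = univ :=
      eq_univ_of_forall fun x => by simp [Subsingleton.elim x 0, hr]
    rw [hball, ← (PiLp.volume_preserving_toLp (Fin 0)).measure_preimage
      MeasurableSet.univ.nullMeasurableSet, preimage_univ]
    simp [volume_pi, unitBallVolume]
  · simpa [unitBallVolume] using EuclideanSpace.volume_closedBall (Fin (n + 1)) 0 r

end EuclideanSpace

lemma volume_setOf_sq_add_norm_sq_le (n : ℕ) {a ν : ℝ} (ha : 0 ≤ a) (hν : ν ≤ a) :
    volume {p : ℝ × EuclideanSpace ℝ (Fin n) | p.1 ^ 2 + ‖p.2‖ ^ 2 ≤ a ^ 2 ∧ p.1 ≤ ν} =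
      ∫⁻ t in Icc (-a) ν, ENNReal.ofReal √(a ^ 2 - t ^ 2) ^ n *
        ENNReal.ofReal (unitBallVolume n) := by
  have hS : MeasurableSet
      {p : ℝ × EuclideanSpace ℝ (Fin n) | p.1 ^ 2 + ‖p.2‖ ^ 2 ≤ a ^ 2 ∧ p.1 ≤ ν} :=
    by measurability
  rw [Measure.volume_eq_prod, Measure.prod_apply hS, ← lintegral_indicator measurableSet_Icc]
  congr 1 with t
  by_cases ht : t ∈ Icc (-a) ν
  · have hslice : Prod.mk t ⁻¹' {p : ℝ × EuclideanSpace ℝ (Fin n) |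
        p.1 ^ 2 + ‖p.2‖ ^ 2 ≤ a ^ 2 ∧ p.1 ≤ ν} = Metric.closedBall 0 √(a ^ 2 - t ^ 2) := by
      ext w
      have : 0 ≤ a ^ 2 - t ^ 2 := by nlinarith [ht.1, ht.2]
      simp only [mem_preimage, mem_ofPred_eq, Metric.mem_closedBall, dist_zero_right,
        Real.le_sqrt (norm_nonneg w) this, ht.2, and_true]
      constructor <;> intro <;> linarith
    rw [hslice, EuclideanSpace.volume_closedBall_zero_fin n (Real.sqrt_nonneg _),
      indicator_of_mem ht]
  · have hslice : Prod.mk t ⁻¹' {p : ℝ × EuclideanSpace ℝ (Fin n) |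
        p.1 ^ 2 + ‖p.2‖ ^ 2 ≤ a ^ 2 ∧ p.1 ≤ ν} = ∅ := by
      refine eq_empty_of_forall_notMem fun w ⟨hw, htν⟩ => ht ⟨?_, htν⟩
      nlinarith [sq_nonneg ‖w‖]
    rw [hslice, measure_empty, indicator_of_notMem ht]

section InnerProductSpace

variable {E : Type*} [NormedAddCommGroup E] [InnerProductSpace ℝ E]

lemma inner_mem_Icc_of_mem_closedBall {θ : E} (hθ : ‖θ‖ = 1) {a : ℝ} {x : E}
    (hx : x ∈ Metric.closedBall (0 : E) a) : ⟪x, θ⟫ ∈ Icc (-a) a := by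
  have := (abs_real_inner_le_norm x θ).trans (by simpa [hθ] using hx)
  exact abs_le.mp this

lemma setOf_norm_le_inner_le_self {θ : E} (hθ : ‖θ‖ = 1) (a : ℝ) :
    {x : E | ‖x‖ ≤ a ∧ ⟪x, θ⟫ ≤ a} = Metric.closedBall 0 a := by
  ext x
  simp only [mem_ofPred_eq, Metric.mem_closedBall, dist_zero_right, and_iff_left_iff_imp]
  exact fun hx => (inner_mem_Icc_of_mem_closedBall hθ (by simpa using hx)).2

theorem volume_cap_eq_lintegral [FiniteDimensional ℝ E] [MeasurableSpace E] [BorelSpace E]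
    {n : ℕ} (hE : Module.finrank ℝ E = n + 1) {θ : E} (hθ : ‖θ‖ = 1)
    {a ν : ℝ} (ha : 0 ≤ a) (hν : ν ≤ a) :
    volume {x : E | ‖x‖ ≤ a ∧ ⟪x, θ⟫ ≤ ν} =
      ∫⁻ t in Icc (-a) ν, ENNReal.ofReal √(a ^ 2 - t ^ 2) ^ n *
        ENNReal.ofReal (unitBallVolume n) := by
  obtain ⟨b, hb⟩ := (orthonormal_subsingleton_iff.mpr fun _ => hθ :
      Orthonormal ℝ (({0} : Set (Fin (n + 1))).domRestrict fun _ => θ)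
    ).exists_orthonormalBasis_extension_of_card_eq (by simpa using hE)
  have hb0 : b 0 = θ := hb 0 rfl
  have hcap : {x : E | ‖x‖ ≤ a ∧ ⟪x, θ⟫ ≤ ν} = (EuclideanSpace.headTailEquiv n ∘ b.repr) ⁻¹'
      {p : ℝ × EuclideanSpace ℝ (Fin n) | p.1 ^ 2 + ‖p.2‖ ^ 2 ≤ a ^ 2 ∧ p.1 ≤ ν} := by
    ext x
    rw [mem_preimage, Function.comp_apply, mem_ofPred_eq, mem_ofPred_eq,
      ← EuclideanSpace.norm_sq_eq_headTailEquiv, EuclideanSpace.headTailEquiv_fst,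
      b.repr.norm_map, b.repr_apply_apply, hb0, real_inner_comm, sq_le_sq₀ (norm_nonneg x) ha]
  rw [hcap, ((EuclideanSpace.measurePreserving_headTailEquiv n).comp
    b.measurePreserving_repr).measure_preimage (by measurability),
    volume_setOf_sq_add_norm_sq_le n ha hν]

theorem volume_cap_eq [FiniteDimensional ℝ E] [MeasurableSpace E] [BorelSpace E]
    {n : ℕ} (hE : Module.finrank ℝ E = n + 1) {θ : E} (hθ : ‖θ‖ = 1)
    {a ν : ℝ} (ha : 0 < a) (hν : ν ∈ Icc (-a) a) :
    volume {x : E | ‖x‖ ≤ a ∧ ⟪x, θ⟫ ≤ ν} =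
      volume (Metric.closedBall (0 : E) a) * ENNReal.ofReal (rescaledBetaCDF (n + 1) a ν) := by
  have : Nontrivial E := Module.nontrivial_of_finrank_eq_succ hE
  have hκ := unitBallVolume_pos
  have hslice (t : ℝ) : ENNReal.ofReal √(a ^ 2 - t ^ 2) ^ n * ENNReal.ofReal (unitBallVolume n) =
      ENNReal.ofReal (√(a ^ 2 - t ^ 2) ^ n * unitBallVolume n) := by
    rw [ENNReal.ofReal_mul (by positivity), ENNReal.ofReal_pow (Real.sqrt_nonneg _)]
  have hcont : Continuous fun t => √(a ^ 2 - t ^ 2) ^ n * unitBallVolume n := by fun_prop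
  rw [volume_cap_eq_lintegral hE hθ ha.le hν.2, InnerProductSpace.volume_closedBall, hE,
    lintegral_congr hslice, ← ofReal_integral_eq_lintegral_ofReal hcont.integrableOn_Icc
      (ae_of_all _ fun _ => mul_nonneg (by positivity) (hκ n).le), integral_Icc_eq_integral_Ioc,
    ← intervalIntegral.integral_of_le hν.1, integral_sqrt_sq_sub_sq_pow_mul_unitBallVolume n ha hν,
    ← ENNReal.ofReal_pow ha.le, ← ENNReal.ofReal_mul (by positivity),
    ← ENNReal.ofReal_mul (by exact mul_nonneg (by positivity) (hκ _).le)]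
  rfl

/-- The normalisation `F_d(a) = 1` is read off from the cap formula at `ν = a`, where the cap is the
whole ball. -/
lemma rescaledBetaCDF_self (n : ℕ) {a : ℝ} (ha : 0 < a) : rescaledBetaCDF (n + 1) a a = 1 := by
  set B := Metric.closedBall (0 : EuclideanSpace ℝ (Fin (n + 1))) a
  have hθ : ‖EuclideanSpace.single (0 : Fin (n + 1)) (1 : ℝ)‖ = 1 := by simp
  have h := volume_cap_eq (n := n) (by simp) hθ ha ⟨by linarith, le_rfl⟩
  rw [setOf_norm_le_inner_le_self hθ] at h
  have hB₀ : volume B ≠ 0 := (Metric.measure_closedBall_pos _ _ ha).ne'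
  have hB : volume B ≠ ⊤ := measure_closedBall_lt_top.ne
  rw [← ENNReal.ofReal_eq_one, ← ENNReal.mul_eq_left hB₀ hB, ← h]

lemma rescaledBetaCDF_inner_mem_Icc (n : ℕ) {θ : E} (hθ : ‖θ‖ = 1) {a : ℝ} (ha : 0 < a) {x : E}
    (hx : x ∈ Metric.closedBall (0 : E) a) : rescaledBetaCDF (n + 1) a ⟪x, θ⟫ ∈ Icc 0 1 := by
  have hF := strictMonoOn_rescaledBetaCDF n ha
  have hxθ := inner_mem_Icc_of_mem_closedBall hθ hx
  rw [← rescaledBetaCDF_neg_self _ ha.ne', ← rescaledBetaCDF_self n ha]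
  exact ⟨hF.monotoneOn ⟨le_rfl, by linarith⟩ hxθ hxθ.1,
    hF.monotoneOn hxθ ⟨by linarith, le_rfl⟩ hxθ.2⟩

lemma preimage_Iic_rescaledBetaCDF_inner_inter_closedBall (n : ℕ) {θ : E} (hθ : ‖θ‖ = 1)
    {a ν : ℝ} (ha : 0 < a) (hν : ν ∈ Icc (-a) a) :
    (fun x => rescaledBetaCDF (n + 1) a ⟪x, θ⟫) ⁻¹' Iic (rescaledBetaCDF (n + 1) a ν) ∩
      Metric.closedBall (0 : E) a = {x : E | ‖x‖ ≤ a ∧ ⟪x, θ⟫ ≤ ν} := by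
  have hF := strictMonoOn_rescaledBetaCDF n ha
  ext x
  constructor
  · rintro ⟨hxν, hxB⟩
    exact ⟨by simpa using hxB, (hF.le_iff_le (inner_mem_Icc_of_mem_closedBall hθ hxB) hν).1 hxν⟩
  · rintro ⟨hxa, hxν⟩
    have hxB : x ∈ Metric.closedBall (0 : E) a := by simpa using hxa
    exact ⟨(hF.le_iff_le (inner_mem_Icc_of_mem_closedBall hθ hxB) hν).2 hxν, hxB⟩

theorem map_restrict_closedBall_rescaledBetaCDF_inner [FiniteDimensional ℝ E]
    [MeasurableSpace E] [BorelSpace E] {n : ℕ} (hE : Module.finrank ℝ E = n + 1)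
    {θ : E} (hθ : ‖θ‖ = 1) {a : ℝ} (ha : 0 < a) :
    (volume.restrict (Metric.closedBall (0 : E) a)).map
        (fun x => rescaledBetaCDF (n + 1) a ⟪x, θ⟫) =
      volume (Metric.closedBall (0 : E) a) • volume.restrict (Icc (0 : ℝ) 1) := by
  set B := Metric.closedBall (0 : E) a
  set F := rescaledBetaCDF (n + 1) a
  have hFB : ∀ x ∈ B, F ⟪x, θ⟫ ∈ Icc 0 1 := fun x => rescaledBetaCDF_inner_mem_Icc n hθ ha
  have hT : Measurable fun x : E => F ⟪x, θ⟫ := by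
    have := continuous_rescaledBetaCDF n a
    fun_prop
  have : IsFiniteMeasure (volume.restrict B) :=
    isFiniteMeasure_restrict.mpr measure_closedBall_lt_top.ne
  refine Measure.ext_of_Iic _ _ fun z => ?_
  rw [Measure.map_apply hT measurableSet_Iic, Measure.restrict_apply (hT measurableSet_Iic),
    Measure.smul_apply, Measure.restrict_apply measurableSet_Iic, smul_eq_mul]
  rcases lt_or_ge z 0 with hz | hz₀
  · have h₁ : (fun x => F ⟪x, θ⟫) ⁻¹' Iic z ∩ B = ∅ :=
      eq_empty_of_forall_notMem fun x ⟨hxz, hxB⟩ => by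
        linarith [(hFB x hxB).1, show F ⟪x, θ⟫ ≤ z from hxz]
    have h₂ : Iic z ∩ Icc (0 : ℝ) 1 = ∅ :=
      eq_empty_of_forall_notMem fun y ⟨hyz, hy⟩ => by linarith [hy.1, mem_Iic.mp hyz]
    simp [h₁, h₂]
  rcases le_or_gt z 1 with hz₁ | hz₁
  · obtain ⟨ν, hν, rfl⟩ : ∃ ν ∈ Icc (-a) a, F ν = z := by
      refine intermediate_value_Icc (by linarith) (continuous_rescaledBetaCDF n a).continuousOn ?_
      rw [rescaledBetaCDF_neg_self _ ha.ne', rescaledBetaCDF_self n ha]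
      exact ⟨hz₀, hz₁⟩
    have h₂ : Iic (F ν) ∩ Icc 0 1 = Icc 0 (F ν) := by
      ext y
      simp only [mem_inter_iff, mem_Iic, mem_Icc]
      exact ⟨fun ⟨h, h₀, _⟩ => ⟨h₀, h⟩, fun ⟨h₀, h⟩ => ⟨h, h₀, h.trans hz₁⟩⟩
    rw [preimage_Iic_rescaledBetaCDF_inner_inter_closedBall n hθ ha hν, volume_cap_eq hE hθ ha hν,
      h₂, Real.volume_Icc, sub_zero]
  · have h₁ : (fun x => F ⟪x, θ⟫) ⁻¹' Iic z ∩ B = B :=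
      inter_eq_right.mpr fun x hx => (hFB x hx).2.trans hz₁.le
    have h₂ : Iic z ∩ Icc (0 : ℝ) 1 = Icc 0 1 :=
      inter_eq_right.mpr fun y hy => hy.2.trans hz₁.le
    simp [h₁, h₂]

end InnerProductSpace

theorem transformed_variable_quasi_uniform_general
    (d : ℕ) (hd : 1 ≤ d) (a : ℝ) (ha : 0 < a)
    (cf Cf : ℝ) (hcf : 0 < cf) (hcfCf : cf ≤ Cf)
    (c : ℝ)
    (hc : c = Real.Gamma ((d : ℝ) + 1) / (Real.Gamma (((d : ℝ) + 1) / 2) ^ 2 * 2 ^ d))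
    (F : ℝ → ℝ)
    (hF : ∀ ν, F ν = ∫ t in (-1 : ℝ)..(ν / a), c * (1 - t ^ 2) ^ (((d : ℝ) - 1) / 2))
    (V : ℝ)
    (hV : V = (volume (Metric.closedBall (0 : EuclideanSpace ℝ (Fin d)) a)).toReal)
    (Ω : Type*) [MeasurableSpace Ω] (P : Measure Ω)
    (X : Ω → EuclideanSpace ℝ (Fin d)) (hX : Measurable X)
    (f : EuclideanSpace ℝ (Fin d) → ℝ)
    (hlaw : Measure.map X P = volume.withDensity (fun x => ENNReal.ofReal (f x)))
    (hf0 : ∀ x, a < ‖x‖ → f x = 0)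
    (hfb : ∀ x, ‖x‖ ≤ a → cf / V ≤ f x ∧ f x ≤ Cf / V)
    (θ : EuclideanSpace ℝ (Fin d)) (hθ : ‖θ‖ = 1) :
    ∃ h : ℝ → ℝ,
      Measure.map (fun ω => F ⟪X ω, θ⟫) P =
          volume.withDensity (fun z => ENNReal.ofReal (h z)) ∧
        ∀ᵐ z : ℝ, (z ∈ Set.Icc (0 : ℝ) 1 → cf ≤ h z ∧ h z ≤ Cf) ∧
          (z ∉ Set.Icc (0 : ℝ) 1 → h z = 0) := by
  obtain ⟨n, rfl⟩ : ∃ n, d = n + 1 := ⟨d - 1, by omega⟩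
  obtain rfl : F = rescaledBetaCDF (n + 1) a := funext fun ν => by rw [hF, hc]; rfl
  set B := Metric.closedBall (0 : EuclideanSpace ℝ (Fin (n + 1))) a
  set T := fun x : EuclideanSpace ℝ (Fin (n + 1)) => rescaledBetaCDF (n + 1) a ⟪x, θ⟫
  have hT : Measurable T := by
    have := continuous_rescaledBetaCDF n a
    fun_prop
  have hB : volume B ≠ ⊤ := measure_closedBall_lt_top.ne
  have hV₀ : 0 < V := hV ▸ ENNReal.toReal_pos (Metric.measure_closedBall_pos _ _ ha).ne' hB
  have hscale (k : ℝ) : (ENNReal.ofReal (k / V) • volume.restrict B).map T =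
      ENNReal.ofReal k • volume.restrict (Icc (0 : ℝ) 1) := by
    rw [Measure.map_smul, map_restrict_closedBall_rescaledBetaCDF_inner (by simp) hθ ha,
      ← ENNReal.ofReal_toReal hB, ← hV, smul_smul, ← ENNReal.ofReal_mul' hV₀.le,
      div_mul_cancel₀ _ hV₀.ne']
  rw [show (fun ω => T (X ω)) = T ∘ X from rfl, ← Measure.map_map hT hX, hlaw]
  refine exists_density_of_smul_restrict_le_le measurableSet_Icc (hcf.le.trans hcfCf) ?_ ?_
  · rw [← hscale]
    exact Measure.map_mono (smul_restrict_le_withDensity_ofReal measurableSet_closedBall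
      fun x hx => (hfb x (by simpa using hx)).1) hT
  · rw [← hscale]
    exact Measure.map_mono (withDensity_ofReal_le_smul_restrict measurableSet_closedBall
      (fun x hx => hf0 x (by simpa using hx)) fun x hx => (hfb x (by simpa using hx)).2) hT

/-- The transformed index variable `Z_θ = F_d(⟨X, θ⟩)` is quasi-uniform
on `[0,1]`: its law has a Lebesgue density `h` with `c_f ≤ h ≤ C_f` a.e. on `[0,1]`
and `h = 0` a.e. outside `[0,1]`. -/
theorem transformed_variable_quasi_uniform
    (d : ℕ) (hd : 1 ≤ d) (a : ℝ) (ha : 0 < a)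
    (cf Cf : ℝ) (hcf : 0 < cf) (hcfCf : cf ≤ Cf)
    (c : ℝ)
    (hc : c = Real.Gamma ((d : ℝ) + 1) / (Real.Gamma (((d : ℝ) + 1) / 2) ^ 2 * 2 ^ d))
    (F : ℝ → ℝ)
    (hF : ∀ ν, F ν = ∫ t in (-1 : ℝ)..(ν / a), c * (1 - t ^ 2) ^ (((d : ℝ) - 1) / 2))
    (V : ℝ)
    (hV : V = (volume (Metric.closedBall (0 : EuclideanSpace ℝ (Fin d)) a)).toReal)
    (Ω : Type*) [MeasurableSpace Ω] (P : Measure Ω) [IsProbabilityMeasure P]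
    (X : Ω → EuclideanSpace ℝ (Fin d)) (hX : Measurable X)
    (f : EuclideanSpace ℝ (Fin d) → ℝ)
    (hlaw : Measure.map X P = volume.withDensity (fun x => ENNReal.ofReal (f x)))
    (hf0 : ∀ x, a < ‖x‖ → f x = 0)
    (hfb : ∀ x, ‖x‖ ≤ a → cf / V ≤ f x ∧ f x ≤ Cf / V)
    (θ : EuclideanSpace ℝ (Fin d)) (hθ : ‖θ‖ = 1) :
    ∃ h : ℝ → ℝ,
      Measure.map (fun ω => F ⟪X ω, θ⟫) P =
          volume.withDensity (fun z => ENNReal.ofReal (h z)) ∧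
        ∀ᵐ z : ℝ, (z ∈ Set.Icc (0 : ℝ) 1 → cf ≤ h z ∧ h z ≤ Cf) ∧
          (z ∉ Set.Icc (0 : ℝ) 1 → h z = 0) :=
  transformed_variable_quasi_uniform_general d hd a ha cf Cf hcf hcfCf c hc F hF V hV Ω P X hX f
    hlaw hf0 hfb θ hθ
end

section
/- For each N ≥ 1 let p_N be a sampling design on U_N = {1,…,N} with inclusion probabilities π_{i,N} and π_{ij,N}, let n_N be positive reals with n_N/N → π ∈ (0,1) as N → ∞, and let d_{1,N},…,d_{N,N} be real numbers. Assume there is λ > 0 with π_{i,N} ≥ λ for all i and N, that limsup_{N→∞} n_N · max_{i≠j} |π_{ij,N} − π_{i,N} π_{j,N}| < ∞, and that limsup_{N→∞} N^{-1} Σ_{i=1}^N d_{i,N}² < ∞. Then E_{p_N} | N^{-1} Σ_{i=1}^N d_{i,N} ( I_i/π_{i,N} − 1 ) | → 0 as N → ∞, where I_i is the indicator that i belongs to the drawn sample. -/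
open Filter

/-!
By Jensen, `E|X| ≤ √(E X²)`, and the second moment of the Horvitz–Thompson error is the quadratic
form `∑_{i,j} d_i d_j (π_ij - π_i π_j) / (π_i π_j)` in `d`. Its diagonal entries are at most `λ⁻²`
and its off-diagonal ones at most `λ⁻² C / n_N`, so by Cauchy–Schwarz, `(∑ |d_i|)² ≤ N ∑ d_i²`,
the second moment of the normalized error is at most `λ⁻² (1/N + C/n_N) · N⁻¹ ∑ d_i²`. This tends
to `0` because `n_N ~ π N → ∞`.
-/

theorem sq_sum_mul_abs_le_sum_mul_sq {α : Type*} [Fintype α] {p : α → ℝ} (hp : ∀ s, 0 ≤ p s)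
    (hsum : ∑ s, p s = 1) (X : α → ℝ) :
    (∑ s, p s * |X s|) ^ 2 ≤ ∑ s, p s * X s ^ 2 := by
  simpa only [smul_eq_mul, sq_abs] using
    (even_two.convexOn_pow (𝕜 := ℝ)).map_sum_le (t := Finset.univ) (fun s _ => hp s) hsum
      (p := fun s => |X s|) (fun _ _ => Set.mem_univ _)

theorem sum_mul_sq_sum_mul {α ι : Type*} [Fintype α] [Fintype ι] (w : α → ℝ) (d : ι → ℝ)
    (Y : ι → α → ℝ) :
    ∑ s, w s * (∑ i, d i * Y i s) ^ 2 = ∑ i, ∑ j, d i * d j * ∑ s, w s * (Y i s * Y j s) := by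
  calc ∑ s, w s * (∑ i, d i * Y i s) ^ 2
      = ∑ s, ∑ i, ∑ j, d i * d j * (w s * (Y i s * Y j s)) := by
        refine Finset.sum_congr rfl fun s _ => ?_
        rw [sq, Finset.sum_mul_sum, Finset.mul_sum]
        refine Finset.sum_congr rfl fun i _ => ?_
        rw [Finset.mul_sum]
        exact Finset.sum_congr rfl fun j _ => by ring
    _ = _ := by
        rw [Finset.sum_comm]
        refine Finset.sum_congr rfl fun i _ => ?_
        rw [Finset.sum_comm]
        simp only [Finset.mul_sum]

theorem sum_sum_mul_mul_le_of_abs_le {ι : Type*} [Fintype ι] [DecidableEq ι] {a : ι → ι → ℝ}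
    {M c : ℝ} (hM : 0 ≤ M) (hc : 0 ≤ c)
    (ha : ∀ i j, |a i j| ≤ M * ((if i = j then 1 else 0) + c)) (d : ι → ℝ) :
    ∑ i, ∑ j, d i * d j * a i j ≤ M * (1 + Fintype.card ι * c) * ∑ i, d i ^ 2 := by
  have hcs : (∑ i, |d i|) ^ 2 ≤ Fintype.card ι * ∑ i, d i ^ 2 := by
    simpa only [sq_abs, Finset.card_univ] using
      sq_sum_le_card_mul_sum_sq (s := Finset.univ) (f := fun i => |d i|)
  calc ∑ i, ∑ j, d i * d j * a i j
      ≤ ∑ i, ∑ j, |d i| * |d j| * (M * ((if i = j then 1 else 0) + c)) := by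
        refine Finset.sum_le_sum fun i _ => Finset.sum_le_sum fun j _ => ?_
        calc d i * d j * a i j ≤ |d i| * |d j| * |a i j| := by
              rw [← abs_mul, ← abs_mul]; exact le_abs_self _
          _ ≤ _ := by gcongr; exact ha i j
    _ = ∑ i, ∑ j, (M * (if i = j then |d i| * |d j| else 0) + M * c * (|d i| * |d j|)) := by
        refine Finset.sum_congr rfl fun i _ => Finset.sum_congr rfl fun j _ => ?_
        split_ifs <;> ring
    _ = M * ∑ i, d i ^ 2 + M * c * (∑ i, |d i|) ^ 2 := by
        simp only [Finset.sum_add_distrib, ← Finset.mul_sum, Finset.sum_ite_eq, Finset.mem_univ,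
          if_true, abs_mul_abs_self, sq, Finset.sum_mul_sum]
    _ ≤ M * (1 + Fintype.card ι * c) * ∑ i, d i ^ 2 := by
        nlinarith [mul_le_mul_of_nonneg_left hcs (mul_nonneg hM hc)]

section SamplingDesign

variable {U : Type*} [Fintype U] [DecidableEq U] (p : Finset U → ℝ)

def inclusionProb (i : U) : ℝ :=
  ∑ s, if i ∈ s then p s else 0

def jointInclusionProb (i j : U) : ℝ :=
  ∑ s, if i ∈ s ∧ j ∈ s then p s else 0

noncomputable def htResidual (i : U) (s : Finset U) : ℝ :=
  (if i ∈ s then 1 else 0) / inclusionProb p i - 1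

/-- The error `∑_{i ∈ s} d i / π i - ∑_i d i` of the Horvitz–Thompson estimator of `∑_i d i`. -/
noncomputable def htError (d : U → ℝ) (s : Finset U) : ℝ :=
  ∑ i, d i * htResidual p i s

variable {p}

theorem inclusionProb_nonneg (hp : ∀ s, 0 ≤ p s) (i : U) : 0 ≤ inclusionProb p i :=
  Finset.sum_nonneg fun s _ => by split_ifs <;> simp [hp s]

theorem inclusionProb_le_one (hp : ∀ s, 0 ≤ p s) (hsum : ∑ s, p s = 1) (i : U) :
    inclusionProb p i ≤ 1 :=
  hsum ▸ Finset.sum_le_sum fun s _ => by split_ifs <;> simp [hp s]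

theorem jointInclusionProb_self (i : U) : jointInclusionProb p i i = inclusionProb p i := by
  simp only [jointInclusionProb, inclusionProb, and_self]

theorem abs_jointInclusionProb_sub_mul_le (hp : ∀ s, 0 ≤ p s) (hsum : ∑ s, p s = 1) {c : ℝ}
    (hc0 : 0 ≤ c)
    (hc : ∀ i j, i ≠ j → |jointInclusionProb p i j - inclusionProb p i * inclusionProb p j| ≤ c)
    (i j : U) :
    |jointInclusionProb p i j - inclusionProb p i * inclusionProb p j|
      ≤ (if i = j then 1 else 0) + c := by
  split_ifs with hij
  · subst hij
    have h0 := inclusionProb_nonneg hp i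
    have h1 := inclusionProb_le_one hp hsum i
    rw [jointInclusionProb_self, abs_le]
    constructor <;> nlinarith
  · simpa using hc i j hij

theorem sum_mul_htResidual_mul (hsum : ∑ s, p s = 1) {i j : U} (hi : inclusionProb p i ≠ 0)
    (hj : inclusionProb p j ≠ 0) :
    ∑ s, p s * (htResidual p i s * htResidual p j s)
      = (jointInclusionProb p i j - inclusionProb p i * inclusionProb p j)
          / (inclusionProb p i * inclusionProb p j) := by
  have hterm : ∀ s, p s * (htResidual p i s * htResidual p j s)
      = (if i ∈ s ∧ j ∈ s then p s else 0) / (inclusionProb p i * inclusionProb p j)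
        - (if i ∈ s then p s else 0) / inclusionProb p i
        - (if j ∈ s then p s else 0) / inclusionProb p j + p s := by
    intro s
    by_cases his : i ∈ s <;> by_cases hjs : j ∈ s <;>
      simp only [htResidual, his, hjs, and_self, and_true, and_false, if_true, if_false] <;>
      field_simp <;> ring
  simp only [hterm, Finset.sum_add_distrib, Finset.sum_sub_distrib, ← Finset.sum_div]
  rw [← inclusionProb, ← inclusionProb, ← jointInclusionProb, hsum]
  field_simp
  ring

theorem sum_mul_htError_sq_le (hp : ∀ s, 0 ≤ p s) (hsum : ∑ s, p s = 1) {lam c : ℝ}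
    (hlam : 0 < lam) (hπ : ∀ i, lam ≤ inclusionProb p i) (hc0 : 0 ≤ c)
    (hc : ∀ i j, i ≠ j → |jointInclusionProb p i j - inclusionProb p i * inclusionProb p j| ≤ c)
    (d : U → ℝ) :
    ∑ s, p s * htError p d s ^ 2 ≤ (lam ^ 2)⁻¹ * (1 + Fintype.card U * c) * ∑ i, d i ^ 2 := by
  have hπpos : ∀ i, 0 < inclusionProb p i := fun i => hlam.trans_le (hπ i)
  refine (sum_mul_sq_sum_mul p d (htResidual p)).trans_le <|
    sum_sum_mul_mul_le_of_abs_le (by positivity) hc0 (fun i j => ?_) d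
  have hden : lam ^ 2 ≤ inclusionProb p i * inclusionProb p j := by
    rw [sq]; exact mul_le_mul (hπ i) (hπ j) hlam.le (hπpos i).le
  rw [sum_mul_htResidual_mul hsum (hπpos i).ne' (hπpos j).ne', abs_div,
    abs_of_pos (mul_pos (hπpos i) (hπpos j)), div_le_iff₀ (mul_pos (hπpos i) (hπpos j))]
  calc |jointInclusionProb p i j - inclusionProb p i * inclusionProb p j|
      ≤ (if i = j then 1 else 0) + c := abs_jointInclusionProb_sub_mul_le hp hsum hc0 hc i j
    _ = (lam ^ 2)⁻¹ * ((if i = j then 1 else 0) + c) * lam ^ 2 := by field_simp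
    _ ≤ _ := by gcongr

theorem sq_sum_mul_abs_inv_card_mul_htError_le (hp : ∀ s, 0 ≤ p s) (hsum : ∑ s, p s = 1)
    {lam c : ℝ} (hlam : 0 < lam) (hπ : ∀ i, lam ≤ inclusionProb p i) (hc0 : 0 ≤ c)
    (hc : ∀ i j, i ≠ j → |jointInclusionProb p i j - inclusionProb p i * inclusionProb p j| ≤ c)
    (d : U → ℝ) :
    (∑ s, p s * |(Fintype.card U : ℝ)⁻¹ * htError p d s|) ^ 2
      ≤ (lam ^ 2)⁻¹ * ((Fintype.card U : ℝ)⁻¹ + c) * ((Fintype.card U : ℝ)⁻¹ * ∑ i, d i ^ 2) := by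
  set m : ℝ := (Fintype.card U : ℝ)
  calc (∑ s, p s * |m⁻¹ * htError p d s|) ^ 2
      ≤ ∑ s, p s * (m⁻¹ * htError p d s) ^ 2 := sq_sum_mul_abs_le_sum_mul_sq hp hsum _
    _ = (m⁻¹) ^ 2 * ∑ s, p s * htError p d s ^ 2 := by
        rw [Finset.mul_sum]; exact Finset.sum_congr rfl fun s _ => by ring
    _ ≤ (m⁻¹) ^ 2 * ((lam ^ 2)⁻¹ * (1 + m * c) * ∑ i, d i ^ 2) := by
        gcongr; exact sum_mul_htError_sq_le hp hsum hlam hπ hc0 hc d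
    _ = (lam ^ 2)⁻¹ * (m⁻¹ + c) * (m⁻¹ * ∑ i, d i ^ 2) := by
        rcases eq_or_ne m 0 with hm | hm
        · simp [hm]
        · field_simp

end SamplingDesign

theorem design_law_of_large_numbers_general
    (p : (N : ℕ) → Finset (Fin N) → ℝ)
    (hp : ∀ N s, 0 ≤ p N s)
    (hsum : ∀ N, ∑ s : Finset (Fin N), p N s = 1)
    (π : (N : ℕ) → Fin N → ℝ)
    (hπ : ∀ N i, π N i = ∑ s : Finset (Fin N), if i ∈ s then p N s else 0)
    (ππ : (N : ℕ) → Fin N → Fin N → ℝ)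
    (hππ : ∀ N i j, ππ N i j = ∑ s : Finset (Fin N), if i ∈ s ∧ j ∈ s then p N s else 0)
    (n : ℕ → ℝ)
    (πl : ℝ) (hπl0 : 0 < πl)
    (hnN : Tendsto (fun N => n N / N) atTop (nhds πl))
    (lam : ℝ) (hlam : 0 < lam) (hπlam : ∀ N i, lam ≤ π N i)
    (hΔ : ∃ C : ℝ, ∀ᶠ N in atTop, ∀ i j : Fin N, i ≠ j →
        n N * |ππ N i j - π N i * π N j| ≤ C)
    (d : (N : ℕ) → Fin N → ℝ)
    (hd : ∃ C : ℝ, ∀ᶠ N : ℕ in atTop, (N : ℝ)⁻¹ * ∑ i : Fin N, d N i ^ 2 ≤ C) :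
    Tendsto
      (fun N => ∑ s : Finset (Fin N), p N s *
        |(N : ℝ)⁻¹ * ∑ i : Fin N, d N i * ((if i ∈ s then 1 else 0) / π N i - 1)|)
      atTop (nhds 0) := by
  obtain rfl : π = fun N => inclusionProb (p N) := funext fun N => funext (hπ N)
  obtain rfl : ππ = fun N => jointInclusionProb (p N) := funext fun N => funext₂ (hππ N)
  obtain ⟨C, hC⟩ := hΔ
  obtain ⟨D, hD⟩ := hd
  have hn : Tendsto n atTop atTop := tendsto_natCast_atTop_atTop.num hπl0 hnN
  have hb : Tendsto (fun N : ℕ => (lam ^ 2)⁻¹ * ((N : ℝ)⁻¹ + max C 0 / n N) * D) atTop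
      (nhds 0) := by
    simpa [div_eq_mul_inv] using (((tendsto_inv_atTop_zero.comp tendsto_natCast_atTop_atTop).add
      (hn.inv_tendsto_atTop.const_mul (max C 0))).const_mul (lam ^ 2)⁻¹).mul_const D
  refine squeeze_zero' (Eventually.of_forall fun N => Finset.sum_nonneg fun s _ =>
    mul_nonneg (hp N s) (abs_nonneg _)) ?_ (by simpa using hb.sqrt)
  filter_upwards [hC, hD, hn.eventually_gt_atTop 0] with N hCN hDN hnpos
  have hc : ∀ i j : Fin N, i ≠ j → |jointInclusionProb (p N) i j
      - inclusionProb (p N) i * inclusionProb (p N) j| ≤ max C 0 / n N := fun i j hij => by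
    rw [le_div_iff₀ hnpos, mul_comm]; exact (hCN i j hij).trans (le_max_left C 0)
  have hc0 : 0 ≤ max C 0 / n N := div_nonneg (le_max_right C 0) hnpos.le
  have hbound := sq_sum_mul_abs_inv_card_mul_htError_le (hp N) (hsum N) hlam (hπlam N) hc0 hc
    (d N)
  rw [Fintype.card_fin] at hbound
  exact Real.le_sqrt_of_sq_le (hbound.trans (by gcongr))

/-- Weak design law of large numbers:
`E_p | N⁻¹ Σ_i d_i (I_i/π_i − 1) | → 0` under the standard design conditions. -/
theorem design_law_of_large_numbers
    (p : (N : ℕ) → Finset (Fin N) → ℝ)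
    (hp : ∀ N s, 0 ≤ p N s)
    (hsum : ∀ N, ∑ s : Finset (Fin N), p N s = 1)
    (π : (N : ℕ) → Fin N → ℝ)
    (hπ : ∀ N i, π N i = ∑ s : Finset (Fin N), if i ∈ s then p N s else 0)
    (ππ : (N : ℕ) → Fin N → Fin N → ℝ)
    (hππ : ∀ N i j, ππ N i j = ∑ s : Finset (Fin N), if i ∈ s ∧ j ∈ s then p N s else 0)
    (n : ℕ → ℝ) (hn : ∀ N, 0 < n N)
    (πl : ℝ) (hπl0 : 0 < πl) (hπl1 : πl < 1)
    (hnN : Tendsto (fun N => n N / N) atTop (nhds πl))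
    (lam : ℝ) (hlam : 0 < lam) (hπlam : ∀ N i, lam ≤ π N i)
    (hΔ : ∃ C : ℝ, ∀ᶠ N in atTop, ∀ i j : Fin N, i ≠ j →
        n N * |ππ N i j - π N i * π N j| ≤ C)
    (d : (N : ℕ) → Fin N → ℝ)
    (hd : ∃ C : ℝ, ∀ᶠ N : ℕ in atTop, (N : ℝ)⁻¹ * ∑ i : Fin N, d N i ^ 2 ≤ C) :
    Tendsto
      (fun N => ∑ s : Finset (Fin N), p N s *
        |(N : ℝ)⁻¹ * ∑ i : Fin N, d N i * ((if i ∈ s then 1 else 0) / π N i - 1)|)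
      atTop (nhds 0) :=
  design_law_of_large_numbers_general p hp hsum π hπ ππ hππ n πl hπl0 hnN lam hlam hπlam hΔ d hd
end
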